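/- arXiv:1606.07158 — 3 statements merged into one kernel-verified Lean document; each statement's English description precedes it below -/
import Mathlib

section
/- Let a, b > 0, 0 < β < 1 with 2β + a(1-β) = 1, and let f : [0,∞) → [0,∞) be C¹ positive satisfying f'(t) ≤ a f(t)/(t+1) + b f(t)^β/(t+1)^{2β} for all t ≥ 0. Then f(t)^{1-β} ≤ f(0)^{1-β}(t+1)^{1-2β} + b(1-β)(t+1)^{1-2β} ln(t+1) for all t ≥ 0. -/
/-!
Substituting `g = f ^ (1 - β)` turns the Bernoulli-type inequality into the linear one
`g' ≤ c g / (t + 1) + b (1 - β) (t + 1) ^ (c - 1)` with `c = a (1 - β) = 1 - 2β`. With the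
integrating factor `(t + 1) ^ (-c)` the inhomogeneity becomes `b (1 - β) / (t + 1)`, so
`(t + 1) ^ (-c) g(t) - b (1 - β) log (t + 1)` is antitone. The criticality condition is exactly
what makes the exponent of the inhomogeneous term `-1`, whence the logarithm.
-/

open Real Set

lemma bernoulli_substitution_le {u f' p q β : ℝ} (hu : 0 < u) (hβ : β < 1)
    (h : f' ≤ p * u + q * u ^ β) :
    f' * (1 - β) * u ^ (1 - β - 1) ≤ (1 - β) * (p * u ^ (1 - β) + q) := by
  have hu_mul : u * u ^ (-β) = u ^ (1 - β) := by
    rw [sub_eq_add_neg, rpow_add hu, rpow_one]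
  have hu_cancel : u ^ β * u ^ (-β) = 1 := by
    rw [← rpow_add hu, add_neg_cancel, rpow_zero]
  have hfactor : 0 ≤ (1 - β) * u ^ (-β) := mul_nonneg (by linarith) (rpow_nonneg hu.le _)
  calc f' * (1 - β) * u ^ (1 - β - 1) = f' * ((1 - β) * u ^ (-β)) := by ring_nf
    _ ≤ (p * u + q * u ^ β) * ((1 - β) * u ^ (-β)) := mul_le_mul_of_nonneg_right h hfactor
    _ = (1 - β) * (p * (u * u ^ (-β)) + q * (u ^ β * u ^ (-β))) := by ring
    _ = (1 - β) * (p * u ^ (1 - β) + q) := by rw [hu_mul, hu_cancel, mul_one]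

section LinearGronwall

variable {g g' : ℝ → ℝ} {c k : ℝ}

lemma antitoneOn_rpow_neg_mul_sub_log (hcont : ContinuousOn g (Ici 0))
    (hg : ∀ t > 0, HasDerivAt g (g' t) t)
    (hle : ∀ t > 0, g' t ≤ c * g t / (t + 1) + k * (t + 1) ^ (c - 1)) :
    AntitoneOn (fun s => (s + 1) ^ (-c) * g s - k * log (s + 1)) (Ici 0) := by
  refine antitoneOn_of_hasDerivWithinAt_nonpos (convex_Ici 0) ?_ (fun t ht => ?_) (fun t ht => ?_)
    (f' := fun t => (t + 1) ^ (-c) * g' t - c * (t + 1) ^ (-c - 1) * g t - k / (t + 1))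
  · have hshift : ContinuousOn (fun s : ℝ => s + 1) (Ici 0) := by fun_prop
    have hshift_pos : ∀ s ∈ Ici (0 : ℝ), 0 < s + 1 := fun s hs => by
      simp only [mem_Ici] at hs; linarith
    exact ((hshift.rpow_const fun s hs => Or.inl (hshift_pos s hs).ne').mul hcont).sub
      (continuousOn_const.mul (hshift.log fun s hs => (hshift_pos s hs).ne'))
  · rw [interior_Ici] at ht
    have hpos : t + 1 ≠ 0 := by simp only [mem_Ioi] at ht; positivity
    have hshift : HasDerivAt (fun s : ℝ => s + 1) 1 t := (hasDerivAt_id' t).add_const 1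
    exact ((((hshift.rpow_const (Or.inl hpos)).mul (hg t ht)).sub
      ((hshift.log hpos).const_mul k)).congr_deriv (by ring)).hasDerivWithinAt
  · rw [interior_Ici] at ht
    have hpos : 0 < t + 1 := by simp only [mem_Ioi] at ht; linarith
    have hdiv : (t + 1) ^ (-c) / (t + 1) = (t + 1) ^ (-c - 1) := by
      rw [rpow_sub hpos, rpow_one]
    have hcancel : (t + 1) ^ (-c) * (t + 1) ^ (c - 1) = 1 / (t + 1) := by
      rw [← rpow_add hpos, show -c + (c - 1) = -1 by ring, rpow_neg_one, one_div]
    have hmul := mul_le_mul_of_nonneg_left (hle t ht) (rpow_nonneg hpos.le (-c))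
    calc (t + 1) ^ (-c) * g' t - c * (t + 1) ^ (-c - 1) * g t - k / (t + 1)
        ≤ (t + 1) ^ (-c) * (c * g t / (t + 1) + k * (t + 1) ^ (c - 1))
          - c * (t + 1) ^ (-c - 1) * g t - k / (t + 1) := by linarith
      _ = 0 := by rw [← hdiv]; linear_combination k * hcancel

lemma le_of_hasDerivAt_le_linear_log (hcont : ContinuousOn g (Ici 0))
    (hg : ∀ t > 0, HasDerivAt g (g' t) t)
    (hle : ∀ t > 0, g' t ≤ c * g t / (t + 1) + k * (t + 1) ^ (c - 1))
    {t : ℝ} (ht : 0 ≤ t) :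
    g t ≤ (g 0 + k * log (t + 1)) * (t + 1) ^ c := by
  have hpos : 0 < t + 1 := by linarith
  have hanti := antitoneOn_rpow_neg_mul_sub_log hcont hg hle self_mem_Ici ht ht
  simp only [zero_add, one_rpow, one_mul, log_one, mul_zero, sub_zero] at hanti
  calc g t = (t + 1) ^ (-c) * g t * (t + 1) ^ c := by
        rw [mul_comm ((t + 1) ^ (-c)), mul_assoc, ← rpow_add hpos, neg_add_cancel, rpow_zero,
          mul_one]
    _ ≤ (g 0 + k * log (t + 1)) * (t + 1) ^ c :=
        mul_le_mul_of_nonneg_right (by linarith) (rpow_nonneg hpos.le c)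

end LinearGronwall

theorem gronwall_type_critical_general (a b β : ℝ) (hβ1 : β < 1) (hcrit : 2 * β + a * (1 - β) = 1)
    (f : ℝ → ℝ) (hf : ContDiff ℝ 1 f)
    (hfpos : ∀ t, 0 ≤ t → 0 < f t)
    (hineq : ∀ t, 0 ≤ t →
      deriv f t ≤ a * f t / (t + 1) + b * f t ^ β / (t + 1) ^ (2 * β)) :
    ∀ t, 0 ≤ t → f t ^ (1 - β) ≤
      f 0 ^ (1 - β) * (t + 1) ^ (1 - 2 * β)
        + b * (1 - β) * (t + 1) ^ (1 - 2 * β) * Real.log (t + 1) := by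
  intro t ht
  have hdf : Differentiable ℝ f := hf.differentiable one_ne_zero
  have hlinear : ∀ s > 0, deriv f s * (1 - β) * f s ^ (1 - β - 1) ≤
      (1 - 2 * β) * f s ^ (1 - β) / (s + 1) + b * (1 - β) * (s + 1) ^ (1 - 2 * β - 1) := by
    intro s hs
    have hpos : 0 < s + 1 := by linarith
    have hbound : deriv f s ≤ a / (s + 1) * f s + b / (s + 1) ^ (2 * β) * f s ^ β := by
      convert hineq s hs.le using 2 <;> ring
    convert bernoulli_substitution_le (hfpos s hs.le) hβ1 hbound using 1
    rw [show 1 - 2 * β - 1 = -(2 * β) by ring, rpow_neg hpos.le,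
      show 1 - 2 * β = a * (1 - β) by linarith]
    ring
  have key := le_of_hasDerivAt_le_linear_log (k := b * (1 - β))
    (hf.continuous.continuousOn.rpow_const fun s hs => Or.inl (hfpos s hs).ne')
    (fun s hs => (hdf s).hasDerivAt.rpow_const (Or.inl (hfpos s hs.le).ne')) hlinear ht
  linarith

theorem gronwall_type_critical (a b β : ℝ) (ha : 0 < a) (hb : 0 < b)
    (hβ0 : 0 < β) (hβ1 : β < 1) (hcrit : 2 * β + a * (1 - β) = 1)
    (f : ℝ → ℝ) (hf : ContDiff ℝ 1 f)
    (hfpos : ∀ t, 0 ≤ t → 0 < f t)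
    (hineq : ∀ t, 0 ≤ t →
      deriv f t ≤ a * f t / (t + 1) + b * f t ^ β / (t + 1) ^ (2 * β)) :
    ∀ t, 0 ≤ t → f t ^ (1 - β) ≤
      f 0 ^ (1 - β) * (t + 1) ^ (1 - 2 * β)
        + b * (1 - β) * (t + 1) ^ (1 - 2 * β) * Real.log (t + 1) :=
  gronwall_type_critical_general a b β hβ1 hcrit f hf hfpos hineq
end

section
/- Let a, b > 0, 0 < β < 1 with 2β + a(1-β) ≠ 1, and let f : [0,∞) → [0,∞) be C¹ positive satisfying f'(t) ≤ a f(t)/(t+1) + b f(t)^β/(t+1)^{2β} for all t ≥ 0. Then f(t)^{1-β} ≤ f(0)^{1-β}(t+1)^{a(1-β)} + (b(1-β)/(1-(2β+a(1-β)))) ((t+1)^{1-2β} - (t+1)^{a(1-β)}) for all t ≥ 0. -/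
/-!
The Bernoulli substitution `g = f ^ (1 - β)` turns the inequality into the linear one
`g' ≤ a (1 - β) g / (t + 1) + b (1 - β) (t + 1) ^ (-2β)`. For a linear inequality
`g' ≤ A g / (t + 1) + B (t + 1) ^ (r - 1)` with `r ≠ A`, the function
`g (t + 1) ^ (-A) - B / (r - A) · (t + 1) ^ (r - A)` has nonpositive derivative, so it is
bounded by its value at `0`.
-/

open Set

theorem le_of_hasDerivAt_le_linear_rpow {g g' : ℝ → ℝ} {A B r : ℝ} (hr : r ≠ A)
    (hg : ∀ t, 0 ≤ t → HasDerivAt g (g' t) t)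
    (hg' : ∀ t, 0 ≤ t → g' t ≤ A * g t / (t + 1) + B * (t + 1) ^ (r - 1)) :
    ∀ t, 0 ≤ t → g t ≤ g 0 * (t + 1) ^ A + B / (r - A) * ((t + 1) ^ r - (t + 1) ^ A) := by
  set C := B / (r - A)
  have hCB : C * (r - A) = B := div_mul_cancel₀ B (sub_ne_zero.2 hr)
  set φ : ℝ → ℝ := fun t ↦ g t * (t + 1) ^ (-A) - C * (t + 1) ^ (r - A)
  have hφ : ∀ t, 0 ≤ t → HasDerivAt φ
      ((t + 1) ^ (-A) * (g' t - (A * g t / (t + 1) + B * (t + 1) ^ (r - 1)))) t := by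
    intro t ht
    have hu : t + 1 ≠ 0 := by positivity
    have hlin : HasDerivAt (fun t : ℝ ↦ t + 1) 1 t := (hasDerivAt_id t).add_const 1
    refine (((hg t ht).mul (hlin.rpow_const (p := -A) (Or.inl hu))).sub
      ((hlin.rpow_const (p := r - A) (Or.inl hu)).const_mul C)).congr_deriv ?_
    rw [Real.rpow_sub_one hu, show r - A - 1 = -A + (r - 1) by ring,
      Real.rpow_add (by positivity), ← hCB]
    ring
  have hanti : AntitoneOn φ (Ici 0) := by
    refine antitoneOn_of_hasDerivWithinAt_nonpos (convex_Ici 0)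
      (fun t ht ↦ (hφ t ht).continuousAt.continuousWithinAt)
      (fun t ht ↦ (hφ t (interior_subset ht)).hasDerivWithinAt) fun t ht ↦ ?_
    have ht0 : 0 ≤ t := interior_subset ht
    exact mul_nonpos_of_nonneg_of_nonpos (by positivity) (sub_nonpos.2 (hg' t ht0))
  intro t ht
  have hu : 0 < t + 1 := by positivity
  have hφt : φ t ≤ g 0 - C := by
    simpa [φ] using hanti self_mem_Ici ht ht
  have hscale : φ t * (t + 1) ^ A = g t - C * (t + 1) ^ r := by
    simp only [φ, sub_mul, mul_assoc, ← Real.rpow_add hu, neg_add_cancel, Real.rpow_zero,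
      sub_add_cancel, mul_one]
  have hbound := mul_le_mul_of_nonneg_right hφt (Real.rpow_nonneg hu.le A)
  rw [hscale] at hbound
  linarith

theorem mul_rpow_one_sub_sub_one_le {a b β d F u v : ℝ} (hβ : β ≤ 1) (hF : 0 < F)
    (hd : d ≤ a * F / u + b * F ^ β / v) :
    d * (1 - β) * F ^ (1 - β - 1) ≤ a * (1 - β) * F ^ (1 - β) / u + b * (1 - β) / v := by
  have hFF : F ^ (-β) * F = F ^ (1 - β) := by
    rw [← Real.rpow_add_one hF.ne']; ring_nf
  have hFFβ : F ^ (-β) * F ^ β = 1 := by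
    rw [← Real.rpow_add hF, neg_add_cancel, Real.rpow_zero]
  calc d * (1 - β) * F ^ (1 - β - 1)
      = (1 - β) * F ^ (-β) * d := by ring_nf
    _ ≤ (1 - β) * F ^ (-β) * (a * F / u + b * F ^ β / v) :=
        mul_le_mul_of_nonneg_left hd (mul_nonneg (by linarith) (Real.rpow_nonneg hF.le _))
    _ = a * (1 - β) * (F ^ (-β) * F) / u + b * (1 - β) * (F ^ (-β) * F ^ β) / v := by ring
    _ = a * (1 - β) * F ^ (1 - β) / u + b * (1 - β) / v := by rw [hFF, hFFβ, mul_one]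

theorem gronwall_type_noncritical_general (a b β : ℝ)
    (hβ1 : β < 1) (hnoncrit : 2 * β + a * (1 - β) ≠ 1)
    (f : ℝ → ℝ) (hf : ContDiff ℝ 1 f)
    (hfpos : ∀ t, 0 ≤ t → 0 < f t)
    (hineq : ∀ t, 0 ≤ t →
      deriv f t ≤ a * f t / (t + 1) + b * f t ^ β / (t + 1) ^ (2 * β)) :
    ∀ t, 0 ≤ t → f t ^ (1 - β) ≤
      f 0 ^ (1 - β) * (t + 1) ^ (a * (1 - β))
        + b * (1 - β) / (1 - (2 * β + a * (1 - β)))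
          * ((t + 1) ^ (1 - 2 * β) - (t + 1) ^ (a * (1 - β))) := by
  have hr : 1 - 2 * β ≠ a * (1 - β) := fun h ↦ hnoncrit (by linarith)
  have hg : ∀ t, 0 ≤ t → HasDerivAt (fun t ↦ f t ^ (1 - β))
      (deriv f t * (1 - β) * f t ^ (1 - β - 1)) t := fun t ht ↦
    ((hf.differentiable one_ne_zero t).hasDerivAt).rpow_const (Or.inl (hfpos t ht).ne')
  have hg' : ∀ t, 0 ≤ t → deriv f t * (1 - β) * f t ^ (1 - β - 1) ≤
      a * (1 - β) * f t ^ (1 - β) / (t + 1) + b * (1 - β) * (t + 1) ^ (1 - 2 * β - 1) := by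
    intro t ht
    rw [show 1 - 2 * β - 1 = -(2 * β) by ring, Real.rpow_neg (by positivity), ← div_eq_mul_inv]
    exact mul_rpow_one_sub_sub_one_le hβ1.le (hfpos t ht) (hineq t ht)
  convert le_of_hasDerivAt_le_linear_rpow hr hg hg' using 4
  ring

theorem gronwall_type_noncritical (a b β : ℝ) (ha : 0 < a) (hb : 0 < b)
    (hβ0 : 0 < β) (hβ1 : β < 1) (hnoncrit : 2 * β + a * (1 - β) ≠ 1)
    (f : ℝ → ℝ) (hf : ContDiff ℝ 1 f)
    (hfpos : ∀ t, 0 ≤ t → 0 < f t)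
    (hineq : ∀ t, 0 ≤ t →
      deriv f t ≤ a * f t / (t + 1) + b * f t ^ β / (t + 1) ^ (2 * β)) :
    ∀ t, 0 ≤ t → f t ^ (1 - β) ≤
      f 0 ^ (1 - β) * (t + 1) ^ (a * (1 - β))
        + b * (1 - β) / (1 - (2 * β + a * (1 - β)))
          * ((t + 1) ^ (1 - 2 * β) - (t + 1) ^ (a * (1 - β))) :=
  gronwall_type_noncritical_general a b β hβ1 hnoncrit f hf hfpos hineq
end

section
/- Let d ≥ 1 and let γ, δ satisfy 1 < γ < 1 + 2/d and γ - 1/d < δ < γ. Let J : [0,∞) → (0,∞) be C¹ satisfying J'(t) ≤ ((2-d(γ-1))/(t+1))J(t) + (b/(t+1)^{2(δ-1)/(γ-1)}) J(t)^{(δ-1)/(γ-1)} for all t ≥ 0, where b > 0. Then J(t) ≤ (J(0)^{(γ-δ)/(γ-1)} + b(γ-δ)/((γ-1)(1-d(γ-δ))))^{(γ-1)/(γ-δ)} (t+1)^{2-d(γ-1)} for all t ≥ 0. -/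
/-!
With `c = 1 - β`, the function `H t = J t ^ c * (t + 1) ^ (-a c)` removes the linear term:
`H' = c (t + 1) ^ (-a c) J ^ (-β) (J' - a J / (t + 1)) ≤ c b (t + 1) ^ (-p)` with
`p = 2β + a c > 1`. This bound is integrable on `[0, ∞)` with integral `c b / (p - 1)`, so
`H t ≤ J 0 ^ c + c b / (p - 1)`, and `J t = H t ^ (1 / c) * (t + 1) ^ a`.
-/

open Real Set

theorem sub_le_sub_of_hasDerivAt_le {D : Set ℝ} (hD : Convex ℝ D) {f f' g g' : ℝ → ℝ}
    (hf : ContinuousOn f D) (hg : ContinuousOn g D)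
    (hf' : ∀ x ∈ interior D, HasDerivAt f (f' x) x)
    (hg' : ∀ x ∈ interior D, HasDerivAt g (g' x) x)
    (hle : ∀ x ∈ interior D, f' x ≤ g' x) {x y : ℝ} (hx : x ∈ D) (hy : y ∈ D) (hxy : x ≤ y) :
    f y - f x ≤ g y - g x := by
  have hmono : MonotoneOn (g - f) D :=
    monotoneOn_of_hasDerivWithinAt_nonneg hD (hg.sub hf)
      (fun z hz => ((hg' z hz).sub (hf' z hz)).hasDerivWithinAt)
      (fun z hz => sub_nonneg.2 (hle z hz))
  have := hmono hx hy hxy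
  simp only [Pi.sub_apply] at this
  linarith

theorem HasDerivAt.rpow_mul_add_one_rpow {J : ℝ → ℝ} {J' t a β : ℝ} (hJ : HasDerivAt J J' t)
    (hJt : 0 < J t) (ht : 0 < t + 1) :
    HasDerivAt (fun s => J s ^ (1 - β) * (s + 1) ^ (-(a * (1 - β))))
      ((1 - β) * (t + 1) ^ (-(a * (1 - β))) * J t ^ (-β) * (J' - a / (t + 1) * J t)) t := by
  have hpow := (hJ.rpow_const (p := 1 - β) (Or.inl hJt.ne')).mul
    (((hasDerivAt_id t).add_const 1).rpow_const (p := -(a * (1 - β))) (Or.inl ht.ne'))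
  refine hpow.congr_deriv ?_
  have hJ1 : J t ^ (1 - β) = J t ^ (-β) * J t := by
    rw [← rpow_add_one hJt.ne']; ring_nf
  have ht1 : (t + 1) ^ (-(a * (1 - β)) - 1) = (t + 1) ^ (-(a * (1 - β))) / (t + 1) := by
    rw [rpow_sub ht, rpow_one]
  simp only [id_eq]
  rw [hJ1, ht1, show 1 - β - 1 = -β by ring]
  field_simp
  ring

theorem mul_rpow_mul_sub_le {x y y' a β b : ℝ} (hx : 0 < x) (hy : 0 < y) (hβ : β ≤ 1)
    (hy' : y' ≤ a / x * y + b / x ^ (2 * β) * y ^ β) :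
    (1 - β) * x ^ (-(a * (1 - β))) * y ^ (-β) * (y' - a / x * y)
      ≤ (1 - β) * b * x ^ (-(2 * β + a * (1 - β))) := by
  calc (1 - β) * x ^ (-(a * (1 - β))) * y ^ (-β) * (y' - a / x * y)
      ≤ (1 - β) * x ^ (-(a * (1 - β))) * y ^ (-β) * (b / x ^ (2 * β) * y ^ β) := by
        gcongr
        linarith
    _ = (1 - β) * b * x ^ (-(2 * β + a * (1 - β))) := by
        rw [rpow_neg hy.le, neg_add, rpow_add hx, rpow_neg hx.le (2 * β)]
        field_simp

section SublinearGronwall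

variable {J : ℝ → ℝ} {a β b : ℝ}

theorem rpow_mul_add_one_rpow_le_of_deriv_le (hβ : β < 1) (hp : 1 < 2 * β + a * (1 - β))
    (hb : 0 ≤ b) (hJc : ContinuousOn J (Ici 0)) (hJd : DifferentiableOn ℝ J (Ioi 0))
    (hJpos : ∀ t, 0 ≤ t → 0 < J t)
    (hineq : ∀ t, 0 < t → deriv J t ≤ a / (t + 1) * J t + b / (t + 1) ^ (2 * β) * J t ^ β)
    {t : ℝ} (ht : 0 ≤ t) :
    J t ^ (1 - β) * (t + 1) ^ (-(a * (1 - β)))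
      ≤ J 0 ^ (1 - β) + (1 - β) * b / (2 * β + a * (1 - β) - 1) := by
  set p := 2 * β + a * (1 - β)
  set K := (1 - β) * b / (p - 1)
  have hK : 0 ≤ K := div_nonneg (mul_nonneg (by linarith) hb) (by linarith)
  have hKp : K * (p - 1) = (1 - β) * b := div_mul_cancel₀ _ (by linarith)
  have hG' : ∀ s, 0 < s + 1 →
      HasDerivAt (fun s => -(K * (s + 1) ^ (1 - p))) ((1 - β) * b * (s + 1) ^ (-p)) s := by
    intro s hs
    refine ((((hasDerivAt_id' s).add_const 1).rpow_const (p := 1 - p)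
      (Or.inl hs.ne')).const_mul K).neg.congr_deriv ?_
    rw [show 1 - p - 1 = -p by ring, ← hKp]
    ring
  have hint : ∀ s ∈ interior (Ici (0 : ℝ)), 0 < s := fun s hs => by rwa [interior_Ici] at hs
  have hH' : ∀ s ∈ interior (Ici (0 : ℝ)), HasDerivAt
      (fun s => J s ^ (1 - β) * (s + 1) ^ (-(a * (1 - β))))
      ((1 - β) * (s + 1) ^ (-(a * (1 - β))) * J s ^ (-β) * (deriv J s - a / (s + 1) * J s)) s :=
    fun s hs => ((hJd s (hint s hs)).differentiableAt (Ioi_mem_nhds (hint s hs))).hasDerivAt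
      |>.rpow_mul_add_one_rpow (hJpos s (hint s hs).le) (by linarith [hint s hs])
  have hHc : ContinuousOn (fun s => J s ^ (1 - β) * (s + 1) ^ (-(a * (1 - β)))) (Ici 0) :=
    (hJc.rpow_const fun _ _ => Or.inr (by linarith)).mul
      ((continuousOn_id.add continuousOn_const).rpow_const fun s hs =>
        Or.inl (add_pos_of_nonneg_of_pos hs zero_lt_one).ne')
  have hGc : ContinuousOn (fun s => -(K * (s + 1) ^ (1 - p))) (Ici 0) :=
    fun s hs => (hG' s (add_pos_of_nonneg_of_pos hs zero_lt_one)).continuousAt.continuousWithinAt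
  have hcomp := sub_le_sub_of_hasDerivAt_le (convex_Ici 0) hHc hGc hH'
    (fun s hs => hG' s (by linarith [hint s hs]))
    (fun s hs => mul_rpow_mul_sub_le (by linarith [hint s hs]) (hJpos s (hint s hs).le) hβ.le
      (hineq s (hint s hs)))
    self_mem_Ici ht ht
  have hdecay : 0 ≤ K * (t + 1) ^ (1 - p) := mul_nonneg hK (by positivity)
  simp only [zero_add, one_rpow, mul_one] at hcomp
  linarith

theorem le_rpow_mul_add_one_rpow_of_deriv_le (hβ : β < 1) (hp : 1 < 2 * β + a * (1 - β))
    (hb : 0 ≤ b) (hJc : ContinuousOn J (Ici 0)) (hJd : DifferentiableOn ℝ J (Ioi 0))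
    (hJpos : ∀ t, 0 ≤ t → 0 < J t)
    (hineq : ∀ t, 0 < t → deriv J t ≤ a / (t + 1) * J t + b / (t + 1) ^ (2 * β) * J t ^ β)
    {t : ℝ} (ht : 0 ≤ t) :
    J t ≤ (J 0 ^ (1 - β) + (1 - β) * b / (2 * β + a * (1 - β) - 1)) ^ (1 / (1 - β))
      * (t + 1) ^ a := by
  have hc : 0 < 1 - β := by linarith
  have hJt := hJpos t ht
  have ht1 : 0 < t + 1 := by linarith
  have hunfold :
      J t = (J t ^ (1 - β) * (t + 1) ^ (-(a * (1 - β)))) ^ (1 / (1 - β)) * (t + 1) ^ a := by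
    rw [mul_rpow (by positivity) (by positivity), ← rpow_mul hJt.le, ← rpow_mul ht1.le,
      mul_one_div_cancel hc.ne', rpow_one, mul_assoc, ← rpow_add ht1,
      show -(a * (1 - β)) * (1 / (1 - β)) + a = 0 by field_simp; ring, rpow_zero, mul_one]
  rw [hunfold]
  gcongr
  exact rpow_mul_add_one_rpow_le_of_deriv_le hβ hp hb hJc hJd hJpos hineq ht

end SublinearGronwall

theorem gronwall_J_sublinear_general (d : ℕ) (γ δ b : ℝ)
    (hγ1 : 1 < γ)
    (hδ1 : γ - 1 / d < δ) (hδ2 : δ < γ) (hb : 0 < b)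
    (J : ℝ → ℝ) (hJ : ContDiff ℝ 1 J)
    (hJpos : ∀ t, 0 ≤ t → 0 < J t)
    (hineq : ∀ t, 0 ≤ t →
      deriv J t ≤ (2 - d * (γ - 1)) / (t + 1) * J t
        + b / (t + 1) ^ (2 * (δ - 1) / (γ - 1)) * J t ^ ((δ - 1) / (γ - 1))) :
    ∀ t, 0 ≤ t →
      J t ≤ (J 0 ^ ((γ - δ) / (γ - 1))
          + b * (γ - δ) / ((γ - 1) * (1 - d * (γ - δ)))) ^ ((γ - 1) / (γ - δ))
        * (t + 1) ^ (2 - (d : ℝ) * (γ - 1)) := by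
  intro t ht
  have hγ : γ - 1 ≠ 0 := by linarith
  have hd : (d : ℝ) * (γ - δ) < 1 := by
    rcases (Nat.cast_nonneg d : (0 : ℝ) ≤ d).eq_or_lt with hd | hd
    · simp [← hd]
    · exact (lt_div_iff₀' hd).1 (sub_lt_comm.1 hδ1)
  have hc : 1 - (δ - 1) / (γ - 1) = (γ - δ) / (γ - 1) := by field_simp; ring
  have hp : 2 * ((δ - 1) / (γ - 1)) + (2 - d * (γ - 1)) * (1 - (δ - 1) / (γ - 1))
      = 2 - d * (γ - δ) := by field_simp; ring
  have key := le_rpow_mul_add_one_rpow_of_deriv_le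
    (a := 2 - d * (γ - 1)) (β := (δ - 1) / (γ - 1))
    (by rw [← sub_pos, hc]; exact div_pos (by linarith) (by linarith)) (by rw [hp]; linarith)
    hb.le hJ.continuous.continuousOn (hJ.differentiable one_ne_zero).differentiableOn hJpos
    (fun s hs => mul_div_assoc 2 (δ - 1) (γ - 1) ▸ hineq s hs.le) ht
  rw [hp, hc, one_div_div] at key
  convert key using 4
  field_simp
  ring

theorem gronwall_J_sublinear (d : ℕ) (hd : 1 ≤ d) (γ δ b : ℝ)
    (hγ1 : 1 < γ) (hγ2 : γ < 1 + 2 / d)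
    (hδ1 : γ - 1 / d < δ) (hδ2 : δ < γ) (hb : 0 < b)
    (J : ℝ → ℝ) (hJ : ContDiff ℝ 1 J)
    (hJpos : ∀ t, 0 ≤ t → 0 < J t)
    (hineq : ∀ t, 0 ≤ t →
      deriv J t ≤ (2 - d * (γ - 1)) / (t + 1) * J t
        + b / (t + 1) ^ (2 * (δ - 1) / (γ - 1)) * J t ^ ((δ - 1) / (γ - 1))) :
    ∀ t, 0 ≤ t →
      J t ≤ (J 0 ^ ((γ - δ) / (γ - 1))
          + b * (γ - δ) / ((γ - 1) * (1 - d * (γ - δ)))) ^ ((γ - 1) / (γ - δ))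
        * (t + 1) ^ (2 - (d : ℝ) * (γ - 1)) :=
  gronwall_J_sublinear_general d γ δ b hγ1 hδ1 hδ2 hb J hJ hJpos hineq
end
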